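/- Let ι : ℕ^ℕ → ℕ^ℕ be injective and B := range(ι). Define the problem f with dom(f) := B and, for p ∈ B: f(p) := ℕ^ℕ \ {Φ_{ι⁻¹(p)}(p)} if p ∈ dom(Φ_{ι⁻¹(p)}), and f(p) := ℕ^ℕ otherwise. Then: (a) f is discontinuous (has no continuous realizer); and (b) if f is effectively discontinuous, then there exists a continuous injective map g : {0,1}^ℕ → ℕ^ℕ (Cantor space with the product topology) with range(g) ⊆ B, i.e., a continuous embedding of Cantor space into B. -/

import Mathlib

noncomputable section

/-- Baire space `ℕ^ℕ`. -/
abbrev Baire : Type := ℕ → ℕ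

/-- The Cantor pairing `⟨n,k⟩ = (n+k)(n+k+1)/2 + k`. -/
def cpair (n k : ℕ) : ℕ := (n + k) * (n + k + 1) / 2 + k

/-- The inverse of the Cantor pairing. -/
noncomputable def cunpair (m : ℕ) : ℕ × ℕ :=
  Classical.epsilon fun x : ℕ × ℕ => cpair x.1 x.2 = m

/-- A fixed bijective numbering `w : ℕ → List ℕ` of finite words. -/
def word (n : ℕ) : List ℕ := Denumerable.ofNat (List ℕ) n

/-- `l` is a finite prefix of the infinite sequence `p`. -/
def IsPrefixOf (l : List ℕ) (p : Baire) : Prop := l = (List.range l.length).map p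

/-- Two words are comparable in the prefix order. -/
def WordComparable (u v : List ℕ) : Prop := u <+: v ∨ v <+: u

/-- The word `w(n_i)` decoded from the `i`-th entry of the code `q`. -/
noncomputable def wn (q : Baire) (i : ℕ) : List ℕ := word (cunpair (q i)).1

/-- The word `w(k_i)` decoded from the `i`-th entry of the code `q`. -/
noncomputable def wk (q : Baire) (i : ℕ) : List ℕ := word (cunpair (q i)).2

/-- The code `q` is consistent. -/
def ConsistentCode (q : Baire) : Prop :=
  ∀ i j, WordComparable (wn q i) (wn q j) → WordComparable (wk q i) (wk q j)

/-- The continuous partial function `Φ_q :⊆ ℕ^ℕ → ℕ^ℕ` coded by `q`. -/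
noncomputable def Phi (q : Baire) : Baire →. Baire := fun p =>
  ⟨ConsistentCode q ∧ ∀ m : ℕ, ∃ i, IsPrefixOf (wn q i) p ∧ m < (wk q i).length,
   fun _ => Classical.epsilon fun x : Baire =>
      ∀ i, IsPrefixOf (wn q i) p → IsPrefixOf (wk q i) x⟩

/-- The pairing `⟨q,p⟩` on Baire space. -/
def bpair (q p : Baire) : Baire := fun n => if n % 2 = 0 then q (n / 2) else p (n / 2)

/-- Even part of a sequence. -/
def evens (r : Baire) : Baire := fun n => r (2 * n)

/-- Odd part of a sequence. -/
def odds (r : Baire) : Baire := fun n => r (2 * n + 1)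

/-- The universal function `U(⟨q,p⟩) = Φ_q(p)`. -/
noncomputable def U : Baire →. Baire := fun r => Phi (evens r) (odds r)

/-- `h` is monotone for the prefix order. -/
def MonotoneWord (h : List ℕ → List ℕ) : Prop := ∀ u v, u <+: v → h u <+: h v

/-- `h` approximates the partial function `F`. -/
def Approximates (h : List ℕ → List ℕ) (F : Baire →. Baire) : Prop :=
  ∀ p, ∀ hp : (F p).Dom,
    (∀ v, IsPrefixOf v p → IsPrefixOf (h v) ((F p).get hp)) ∧
    (∀ m : ℕ, ∃ v, IsPrefixOf v p ∧ m < (h v).length)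

/-- `F :⊆ ℕ^ℕ → ℕ^ℕ` is continuous: some monotone word function approximates it. -/
def ContinuousPF (F : Baire →. Baire) : Prop := ∃ h, MonotoneWord h ∧ Approximates h F

/-- `F :⊆ ℕ^ℕ → ℕ^ℕ` is computable: some computable monotone word function approximates it. -/
def ComputablePF (F : Baire →. Baire) : Prop :=
  ∃ h, Computable h ∧ MonotoneWord h ∧ Approximates h F

/-- A total function is computable iff it is computable as a partial function with full domain. -/
def ComputableTotal (F : Baire → Baire) : Prop := ComputablePF fun p => Part.some (F p)

/-- A problem (multivalued function on Baire space). -/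
abbrev Problem : Type := Baire → Set Baire

/-- `F` is a realizer of the problem `f`. -/
def Realizes (F : Baire →. Baire) (f : Problem) : Prop :=
  ∀ p, (f p).Nonempty → ∃ h : (F p).Dom, (F p).get h ∈ f p

/-- `f` is continuous: it has a continuous realizer. -/
def ContinuousProblem (f : Problem) : Prop := ∃ F, ContinuousPF F ∧ Realizes F f

/-- The discontinuity problem `DIS`. -/
noncomputable def DIS : Problem := fun p => {q | q ∉ U p}

/-- `D` is a discontinuity function for `f`. -/
def DiscontinuityFunction (D : Baire → Baire) (f : Problem) : Prop :=
  ∀ q, (f (D q)).Nonempty ∧ ∀ y ∈ Phi q (D q), y ∉ f (D q)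

/-- `f` is computably discontinuous. -/
def ComputablyDiscontinuous (f : Problem) : Prop :=
  ∃ D, ComputableTotal D ∧ DiscontinuityFunction D f

/-- `f` is effectively discontinuous. -/
def EffectivelyDiscontinuous (f : Problem) : Prop :=
  ∃ D : Baire → Baire, Continuous D ∧ DiscontinuityFunction D f

/-- Weihrauch reducibility `f ≤_W g`. -/
def WeihrauchRed (f g : Problem) : Prop :=
  ∃ H K : Baire →. Baire, ComputablePF H ∧ ComputablePF K ∧
    ∀ G : Baire →. Baire, Realizes G g →
      Realizes (fun p => (K p).bind fun s => (G s).bind fun t => H (bpair p t)) f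

/-- Strong Weihrauch reducibility `f ≤_sW g`. -/
def StrongWeihrauchRed (f g : Problem) : Prop :=
  ∃ H K : Baire →. Baire, ComputablePF H ∧ ComputablePF K ∧
    ∀ G : Baire →. Baire, Realizes G g →
      Realizes (fun p => (K p).bind fun s => (G s).bind fun t => H t) f

/-- Continuous Weihrauch reducibility `f ≤*_W g`. -/
def ContWeihrauchRed (f g : Problem) : Prop :=
  ∃ H K : Baire →. Baire, ContinuousPF H ∧ ContinuousPF K ∧
    ∀ G : Baire →. Baire, Realizes G g →
      Realizes (fun p => (K p).bind fun s => (G s).bind fun t => H (bpair p t)) f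

/-- Continuous strong Weihrauch reducibility `f ≤*_sW g`. -/
def ContStrongWeihrauchRed (f g : Problem) : Prop :=
  ∃ H K : Baire →. Baire, ContinuousPF H ∧ ContinuousPF K ∧
    ∀ G : Baire →. Baire, Realizes G g →
      Realizes (fun p => (K p).bind fun s => (G s).bind fun t => H t) f

/-- Concatenation of the first `n` moves. -/
def concatN (ms : ℕ → List ℕ) (n : ℕ) : List ℕ := ((List.range n).map ms).flatten

/-- The concatenated play is infinite. -/
def PlayInf (ms : ℕ → List ℕ) : Prop := ∀ m : ℕ, ∃ n, m < (concatN ms n).length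

/-- The infinite sequence determined by an infinite play. -/
noncomputable def playLim (ms : ℕ → List ℕ) : Baire :=
  Classical.epsilon fun p : Baire => ∀ n, IsPrefixOf (concatN ms n) p

/-- Player II wins the run of the Wadge game of `f` given by the moves `xs` of I and `ys` of II. -/
def WadgeIIWins (f : Problem) (xs ys : ℕ → List ℕ) : Prop :=
  (PlayInf xs ∧ (f (playLim xs)).Nonempty) → (PlayInf ys ∧ playLim ys ∈ f (playLim xs))

/-- The list of first `n` moves. -/
def histW (xs : ℕ → List ℕ) (n : ℕ) : List (List ℕ) := (List.range n).map xs

/-- `σ` is a winning strategy for Player II in the Wadge game of `f`. -/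
def WadgeWinningII (f : Problem) (σ : List (List ℕ) → List ℕ) : Prop :=
  ∀ xs : ℕ → List ℕ, WadgeIIWins f xs fun i => σ (histW xs (i + 1))

/-- `σ` is a winning strategy for Player I in the Wadge game of `f`. -/
def WadgeWinningI (f : Problem) (σ : List (List ℕ) → List ℕ) : Prop :=
  ∀ ys : ℕ → List ℕ, ¬ WadgeIIWins f (fun i => σ (histW ys i)) ys

/-- The list of first `n` values of a sequence. -/
def histN (x : Baire) (n : ℕ) : List ℕ := (List.range n).map x

/-- Player II wins the run `(x,y)` of the Lipschitz game of `f`. -/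
def LipIIWins (f : Problem) (x y : Baire) : Prop := (f x).Nonempty → y ∈ f x

/-- `σ` is a winning strategy for Player II in the Lipschitz game of `f`. -/
def LipWinningII (f : Problem) (σ : List ℕ → ℕ) : Prop :=
  ∀ x : Baire, LipIIWins f x fun i => σ (histN x (i + 1))

/-- `σ` is a winning strategy for Player I in the Lipschitz game of `f`. -/
def LipWinningI (f : Problem) (σ : List ℕ → ℕ) : Prop :=
  ∀ y : Baire, ¬ LipIIWins f (fun i => σ (histN y i)) y

/-- `σ` is a winning strategy for Player II in the Gale–Stewart game `A`. -/
def GSWinningII (A : Set Baire) (σ : List ℕ → ℕ) : Prop :=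
  ∀ x : Baire, bpair x (fun i => σ (histN x (i + 1))) ∈ A

/-- `σ` is a winning strategy for Player I in the Gale–Stewart game `A`. -/
def GSWinningI (A : Set Baire) (σ : List ℕ → ℕ) : Prop :=
  ∀ y : Baire, bpair (fun i => σ (histN y i)) y ∉ A

/-- The totalization `Tf` of `f`. -/
def Totalization (f : Problem) : Problem := fun p => {q | (f p).Nonempty → q ∈ f p}

/-- The paired graph `⟨graph(Tf)⟩ ⊆ ℕ^ℕ`. -/
def pairedGraph (f : Problem) : Set Baire :=
  {r | ∃ x y : Baire, r = bpair x y ∧ y ∈ Totalization f x}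

/-- Domain of the word concatenation map `w*`. -/
def wstarDom (p : Baire) : Prop := PlayInf fun i => word (p i)

/-- The word concatenation map `w* : p ↦ w(p 0) w(p 1) ⋯` (on its domain). -/
noncomputable def wstar (p : Baire) : Baire := playLim fun i => word (p i)

/-- The problem `f^w = w*⁻¹ ∘ f ∘ w*`. -/
noncomputable def wordLift (f : Problem) : Problem := fun p =>
  {q | wstarDom p ∧ (f (wstar p)).Nonempty ∧ wstarDom q ∧ wstar q ∈ f (wstar p)}

/-- The `i`-th component of a tupled sequence. -/
def tupleComp (p : Baire) (i : ℕ) : Baire := fun n => p (cpair i n)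

/-- The parallelization `⟨f⟩` of `f`. -/
def Parallelization (f : Problem) : Problem := fun p =>
  {q | ∀ i, tupleComp q i ∈ f (tupleComp p i)}

/-- Turing reducibility: `p` is computable relative to the oracle `q`. -/
def TuringLe (p q : Baire) : Prop := ∃ F : Baire →. Baire, ComputablePF F ∧ p ∈ F q

end

/-!
Every continuous partial function on Baire space is some `Φ_q`, and `f (ι q)` consists exactly of
the points avoiding `Φ_q (ι q)`, so no continuous realizer can succeed at `ι q`.

For the embedding, feed a discontinuity function `D` the codes `q` of constant functions
`p ↦ x`. Then `D q` lies in the domain of `f`, so `D q = ι z`, and `x = Φ_q (D q) ∉ f (ι z)`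
forces `x = Φ_z (ι z)`. Hence `x` is recovered from `D q`, and `x ↦ D q` is a continuous
injection of Baire space, in particular of Cantor space, into `range ι`.
-/

open Function Set

lemma triangle_succ (t : ℕ) : (t + 1) * (t + 1 + 1) / 2 = t * (t + 1) / 2 + (t + 1) := by
  rw [show (t + 1) * (t + 1 + 1) = t * (t + 1) + (t + 1) * 2 by ring,
    Nat.add_mul_div_right _ _ two_pos]

lemma cpair_lt_cpair {n k n' k' : ℕ} (h : n + k < n' + k') : cpair n k < cpair n' k' := by
  have hmono : (n + k + 1) * (n + k + 1 + 1) / 2 ≤ (n' + k') * (n' + k' + 1) / 2 :=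
    Nat.div_le_div_right (Nat.mul_le_mul h (by omega))
  have := triangle_succ (n + k)
  unfold cpair
  omega

lemma cpair_injective : Injective fun x : ℕ × ℕ => cpair x.1 x.2 := by
  rintro ⟨n, k⟩ ⟨n', k'⟩ h
  dsimp only at h
  rcases lt_trichotomy (n + k) (n' + k') with hlt | heq | hgt
  · exact absurd h (cpair_lt_cpair hlt).ne
  · unfold cpair at h
    rw [heq] at h
    ext <;> dsimp only <;> omega
  · exact absurd h (cpair_lt_cpair hgt).ne'

@[simp]
lemma cunpair_cpair (n k : ℕ) : cunpair (cpair n k) = (n, k) :=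
  cpair_injective <| Classical.epsilon_spec
    (p := fun x : ℕ × ℕ => cpair x.1 x.2 = cpair n k) ⟨(n, k), rfl⟩

@[simp]
lemma word_encode (l : List ℕ) : word (Encodable.encode l) = l :=
  Denumerable.ofNat_encode l

lemma isPrefixOf_map_range (x : Baire) (n : ℕ) : IsPrefixOf ((List.range n).map x) x := by
  simp [IsPrefixOf]

lemma IsPrefixOf.apply_eq_apply {l : List ℕ} {a b : Baire} (ha : IsPrefixOf l a)
    (hb : IsPrefixOf l b) {n : ℕ} (hn : n < l.length) : a n = b n := by
  simpa [hn] using congrArg (·[n]?) (ha.symm.trans hb)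

lemma Part.exists_not_mem {α : Type*} [Nontrivial α] (o : Part α) : ∃ a, a ∉ o := by
  obtain ⟨a, b, hab⟩ := exists_pair_ne α
  by_contra! h
  exact hab (Part.mem_unique (h a) (h b))

lemma mem_Phi_of_forall {q p x : Baire} (hq : ConsistentCode q)
    (hdom : ∀ m, ∃ i, IsPrefixOf (wn q i) p ∧ m < (wk q i).length)
    (hx : ∀ i, IsPrefixOf (wn q i) p → IsPrefixOf (wk q i) x) : x ∈ Phi q p := by
  refine ⟨⟨hq, hdom⟩, funext fun n => ?_⟩
  have hspec := Classical.epsilon_spec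
    (p := fun y : Baire => ∀ i, IsPrefixOf (wn q i) p → IsPrefixOf (wk q i) y) ⟨x, hx⟩
  obtain ⟨i, hi, hlen⟩ := hdom n
  exact (hspec i hi).apply_eq_apply (hx i hi) hlen

def pairsCode (u v : ℕ → List ℕ) : Baire :=
  fun i => cpair (Encodable.encode (u i)) (Encodable.encode (v i))

@[simp]
lemma wn_pairsCode (u v : ℕ → List ℕ) (i : ℕ) : wn (pairsCode u v) i = u i := by
  simp [wn, pairsCode]

@[simp]
lemma wk_pairsCode (u v : ℕ → List ℕ) (i : ℕ) : wk (pairsCode u v) i = v i := by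
  simp [wk, pairsCode]

lemma ContinuousPF.exists_code {F : Baire →. Baire} (hF : ContinuousPF F) :
    ∃ q, ∀ p (hp : (F p).Dom), (F p).get hp ∈ Phi q p := by
  obtain ⟨h, hmono, happ⟩ := hF
  refine ⟨pairsCode word (h ∘ word), fun p hp => mem_Phi_of_forall ?_ ?_ ?_⟩
  · intro i j hij
    simp only [wn_pairsCode, wk_pairsCode, comp_apply] at hij ⊢
    exact hij.imp (hmono _ _) (hmono _ _)
  · intro m
    obtain ⟨v, hv, hlen⟩ := (happ p hp).2 m
    exact ⟨Encodable.encode v, by simpa using hv, by simpa using hlen⟩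
  · intro i hi
    simpa using (happ p hp).1 _ (by simpa using hi)

theorem not_continuousProblem {ι : Baire → Baire} {f : Problem}
    (hf : ∀ x, f (ι x) = {y | y ∉ Phi x (ι x)}) : ¬ ContinuousProblem f := by
  rintro ⟨F, hF, hreal⟩
  obtain ⟨q, hq⟩ := hF.exists_code
  obtain ⟨hp, hmem⟩ := hreal (ι q) (by rw [hf]; exact (Phi q (ι q)).exists_not_mem)
  rw [hf] at hmem
  exact hmem (hq _ hp)

def constCode (x : Baire) : Baire := pairsCode (fun _ => []) fun i => (List.range i).map x

lemma mem_Phi_constCode (x p : Baire) : x ∈ Phi (constCode x) p := by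
  refine mem_Phi_of_forall (fun i j _ => ?_) (fun m => ⟨m + 1, ?_⟩) fun i _ => ?_
  · simp only [constCode, wk_pairsCode]
    rcases le_total i j with h | h
    · exact .inl <| .map _ <| by simp [List.prefix_iff_eq_take, List.take_range, h]
    · exact .inr <| .map _ <| by simp [List.prefix_iff_eq_take, List.take_range, h]
  · simp [constCode, IsPrefixOf]
  · simpa [constCode] using isPrefixOf_map_range x i

lemma continuous_constCode : Continuous constCode := by
  refine continuous_pi fun i => ?_
  have hfin : (fun x : Baire => constCode x i) =
      (fun v : Fin i → ℕ => cpair (Encodable.encode ([] : List ℕ)) (Encodable.encode (List.ofFn v)))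
        ∘ fun x j => x j := by
    funext x
    simp only [constCode, pairsCode, comp_apply]
    congr 2
    apply List.ext_getElem <;> simp
  rw [hfin]
  exact continuous_of_discreteTopology.comp (continuous_pi fun j => continuous_apply _)

namespace DiscontinuityFunction

variable {ι D : Baire → Baire} {f : Problem}

lemma mem_range (hD : DiscontinuityFunction D f) (hf : ∀ p, p ∉ range ι → f p = ∅) (q : Baire) :
    D q ∈ range ι := by
  by_contra hq
  simpa [hf _ hq] using (hD q).1

lemma mem_Phi_of_apply_constCode_eq (hD : DiscontinuityFunction D f)
    (hf : ∀ x, f (ι x) = {y | y ∉ Phi x (ι x)}) {x z : Baire} (hxz : D (constCode x) = ι z) :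
    x ∈ Phi z (ι z) := by
  have hx := (hD (constCode x)).2 x (mem_Phi_constCode x _)
  rw [hxz, hf] at hx
  simpa using hx

lemma injective_comp_constCode (hD : DiscontinuityFunction D f)
    (hf₁ : ∀ x, f (ι x) = {y | y ∉ Phi x (ι x)}) (hf₂ : ∀ p, p ∉ range ι → f p = ∅) :
    Injective (D ∘ constCode) := by
  intro x x' hxx'
  obtain ⟨z, hz⟩ := hD.mem_range hf₂ (constCode x)
  exact Part.mem_unique (hD.mem_Phi_of_apply_constCode_eq hf₁ hz.symm)
    (hD.mem_Phi_of_apply_constCode_eq hf₁ (hz.trans hxx').symm)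

end DiscontinuityFunction

theorem embedding_from_effective_discontinuity_general (ι : Baire → Baire)
    (f : Problem)
    (hf₁ : ∀ x : Baire, f (ι x) = {y | y ∉ Phi x (ι x)})
    (hf₂ : ∀ p : Baire, p ∉ Set.range ι → f p = ∅) :
    ¬ ContinuousProblem f ∧
      (EffectivelyDiscontinuous f →
        ∃ g : (ℕ → Bool) → Baire, Continuous g ∧ Function.Injective g ∧
          Set.range g ⊆ Set.range ι) := by
  refine ⟨not_continuousProblem hf₁, ?_⟩
  rintro ⟨D, hDcont, hD⟩
  have hencode_cont : Continuous fun b : ℕ → Bool => Encodable.encode ∘ b :=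
    continuous_pi fun n => continuous_of_discreteTopology.comp (continuous_apply n)
  refine ⟨D ∘ constCode ∘ (Encodable.encode ∘ ·), hDcont.comp (continuous_constCode.comp
    hencode_cont), (hD.injective_comp_constCode hf₁ hf₂).comp
    Encodable.encode_injective.comp_left, ?_⟩
  rintro _ ⟨b, rfl⟩
  exact hD.mem_range hf₂ _

/-- The problem built from an injection `ι` is discontinuous, and if it is effectively
discontinuous then Cantor space embeds continuously into `range ι`. -/
theorem embedding_from_effective_discontinuity (ι : Baire → Baire)
    (hι : Function.Injective ι) (f : Problem)
    (hf₁ : ∀ x : Baire, f (ι x) = {y | y ∉ Phi x (ι x)})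
    (hf₂ : ∀ p : Baire, p ∉ Set.range ι → f p = ∅) :
    ¬ ContinuousProblem f ∧
      (EffectivelyDiscontinuous f →
        ∃ g : (ℕ → Bool) → Baire, Continuous g ∧ Function.Injective g ∧
          Set.range g ⊆ Set.range ι) :=
  embedding_from_effective_discontinuity_general ι f hf₁ hf₂
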